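/- arXiv:2205.15368 — 2 statements merged into one kernel-verified Lean document; each statement's English description precedes it below -/
import Mathlib

section
/- Let H be a Hilbert space, F : H × [0,∞) → [-∞,∞], Q ∈ L(H,H) self-adjoint positive semidefinite, and M a closed subspace such that: (a) F(h,u) ≥ F(P_M h, u) for all h, u; (b) for each h, u ↦ F(h,u) is nondecreasing; (c) Q M ⊆ M. Then inf_{h ∈ H} F(h, ⟨Qh,h⟩^{1/2}) = inf_{h ∈ M} F(h, ⟨Qh,h⟩^{1/2}), and if h* is a global minimizer of h ↦ F(h, ⟨Qh,h⟩^{1/2}) then so is P_M h*. -/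
/-! Since `Q` is self-adjoint and leaves `M` invariant, the quadratic form `⟪Q h, h⟫` splits
orthogonally along `M ⊕ Mᗮ`, so by positivity it can only decrease when `h` is replaced by `P_M h`.
Monotonicity of `F` in its second argument and hypothesis (a) then bound the objective at `P_M h`
by the objective at `h`. -/

open scoped InnerProductSpace RealInnerProductSpace

namespace Submodule

theorem inner_map_self_eq_starProjection_add {𝕜 E : Type*} [RCLike 𝕜] [NormedAddCommGroup E]
    [InnerProductSpace 𝕜 E] (K : Submodule 𝕜 E) [K.HasOrthogonalProjection] {T : E →ₗ[𝕜] E}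
    (hT : T.IsSymmetric) (hTK : ∀ x ∈ K, T x ∈ K) (h : E) :
    ⟪T h, h⟫_𝕜 = ⟪T (K.starProjection h), K.starProjection h⟫_𝕜
      + ⟪T (h - K.starProjection h), h - K.starProjection h⟫_𝕜 := by
  set p := K.starProjection h
  set q := h - p
  have hTp : T p ∈ K := hTK p (K.starProjection_apply_mem h)
  have hq : q ∈ Kᗮ := K.sub_starProjection_mem_orthogonal h
  have hpq : ⟪T p, q⟫_𝕜 = 0 := inner_right_of_mem_orthogonal hTp hq
  have hqp : ⟪T q, p⟫_𝕜 = 0 := by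
    rw [hT]
    exact inner_left_of_mem_orthogonal hTp hq
  rw [show h = p + q from (add_sub_cancel p h).symm, map_add, inner_add_left, inner_add_right,
    inner_add_right, hpq, hqp, add_zero, zero_add]

theorem inner_map_starProjection_self_le {E : Type*} [NormedAddCommGroup E]
    [InnerProductSpace ℝ E] (K : Submodule ℝ E) [K.HasOrthogonalProjection] {T : E →ₗ[ℝ] E}
    (hT : T.IsSymmetric) (hT_nonneg : ∀ x, 0 ≤ ⟪T x, x⟫) (hTK : ∀ x ∈ K, T x ∈ K) (h : E) :
    ⟪T (K.starProjection h), K.starProjection h⟫ ≤ ⟪T h, h⟫ := by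
  rw [K.inner_map_self_eq_starProjection_add hT hTK h]
  exact le_add_of_nonneg_right (hT_nonneg _)

end Submodule

theorem apply_starProjection_sqrt_inner_le {E α : Type*} [NormedAddCommGroup E]
    [InnerProductSpace ℝ E] [Preorder α] (K : Submodule ℝ E) [K.HasOrthogonalProjection]
    {T : E →ₗ[ℝ] E} (hT : T.IsSymmetric) (hT_nonneg : ∀ x, 0 ≤ ⟪T x, x⟫)
    (hTK : ∀ x ∈ K, T x ∈ K) {F : E → ℝ → α}
    (hF_proj : ∀ h u, 0 ≤ u → F (K.starProjection h) u ≤ F h u)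
    (hF_mono : ∀ h, MonotoneOn (F h) (Set.Ici 0)) (h : E) :
    F (K.starProjection h) √⟪T (K.starProjection h), K.starProjection h⟫ ≤ F h √⟪T h, h⟫ :=
  calc F (K.starProjection h) √⟪T (K.starProjection h), K.starProjection h⟫
      ≤ F (K.starProjection h) √⟪T h, h⟫ :=
        hF_mono _ (Real.sqrt_nonneg _) (Real.sqrt_nonneg _)
          (Real.sqrt_le_sqrt (K.inner_map_starProjection_self_le hT hT_nonneg hTK h))
    _ ≤ F h √⟪T h, h⟫ := hF_proj h _ (Real.sqrt_nonneg _)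

theorem stmt7_general {H : Type*} [NormedAddCommGroup H] [InnerProductSpace ℝ H]
    (Q : H →L[ℝ] H) (hsa : ∀ x y : H, ⟪Q x, y⟫ = ⟪x, Q y⟫)
    (hpsd : ∀ h : H, 0 ≤ ⟪Q h, h⟫)
    (M : Submodule ℝ H) [CompleteSpace M]
    (F : H → ℝ → EReal)
    (ha : ∀ (h : H) (u : ℝ), 0 ≤ u → F ((Submodule.orthogonalProjectionOnto M h : H)) u ≤ F h u)
    (hb : ∀ h : H, MonotoneOn (F h) (Set.Ici (0 : ℝ)))
    (hc : ∀ x ∈ M, Q x ∈ M) :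
    (⨅ h : H, F h (Real.sqrt ⟪Q h, h⟫)) = (⨅ h : M, F (h : H) (Real.sqrt ⟪Q (h : H), (h : H)⟫))
      ∧ ∀ hstar : H, (∀ h : H, F hstar (Real.sqrt ⟪Q hstar, hstar⟫) ≤ F h (Real.sqrt ⟪Q h, h⟫)) →
          (∀ h : H, F ((Submodule.orthogonalProjectionOnto M hstar : H))
              (Real.sqrt ⟪Q (Submodule.orthogonalProjectionOnto M hstar : H), (Submodule.orthogonalProjectionOnto M hstar : H)⟫)
            ≤ F h (Real.sqrt ⟪Q h, h⟫)) := by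
  have proj_le := apply_starProjection_sqrt_inner_le M (T := (Q : H →ₗ[ℝ] H)) hsa hpsd hc ha hb
  refine ⟨le_antisymm ?_ ?_, fun hstar hmin h => (proj_le hstar).trans (hmin h)⟩
  · exact le_iInf fun m => iInf_le _ (m : H)
  · exact le_iInf fun h => (iInf_le _ (M.orthogonalProjectionOnto h)).trans (proj_le h)

theorem stmt7 {H : Type*} [NormedAddCommGroup H] [InnerProductSpace ℝ H] [CompleteSpace H]
    (Q : H →L[ℝ] H) (hsa : ∀ x y : H, ⟪Q x, y⟫ = ⟪x, Q y⟫)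
    (hpsd : ∀ h : H, 0 ≤ ⟪Q h, h⟫)
    (M : Submodule ℝ H) [CompleteSpace M]
    (F : H → ℝ → EReal)
    (ha : ∀ (h : H) (u : ℝ), 0 ≤ u → F ((Submodule.orthogonalProjectionOnto M h : H)) u ≤ F h u)
    (hb : ∀ h : H, MonotoneOn (F h) (Set.Ici (0 : ℝ)))
    (hc : ∀ x ∈ M, Q x ∈ M) :
    (⨅ h : H, F h (Real.sqrt ⟪Q h, h⟫)) = (⨅ h : M, F (h : H) (Real.sqrt ⟪Q (h : H), (h : H)⟫))
      ∧ ∀ hstar : H, (∀ h : H, F hstar (Real.sqrt ⟪Q hstar, hstar⟫) ≤ F h (Real.sqrt ⟪Q h, h⟫)) →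
          (∀ h : H, F ((Submodule.orthogonalProjectionOnto M hstar : H))
              (Real.sqrt ⟪Q (Submodule.orthogonalProjectionOnto M hstar : H), (Submodule.orthogonalProjectionOnto M hstar : H)⟫)
            ≤ F h (Real.sqrt ⟪Q h, h⟫)) :=
  stmt7_general Q hsa hpsd M F ha hb hc
end

section
/- Under the hypotheses of the general Hilbert-space minimization theorem (F(h,u) ≥ F(P_M h, u); Q self-adjoint psd; Q M ⊆ M), if additionally for each h the map u ↦ F(h,u) is strictly increasing and N_Q ⊆ M (equivalently N_Q ∩ M^⊥ = {0}), then every global minimizer h* of h ↦ F(h, ⟨Qh,h⟩^{1/2}) lies in M. -/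
/-!
Write `h = P h + r` with `r ∈ Mᗮ`. Since `Q` is symmetric and leaves `M` invariant, the cross
terms vanish and `⟪Q h, h⟫ = ⟪Q (P h), P h⟫ + ⟪Q r, r⟫`. If `h ∉ M` then `r ∉ N_Q`, so the last
term is positive; strict monotonicity of `F (P h) ·` together with `F (P h) u ≤ F h u` then makes
`P h` a strictly better point than `h`.
-/

open scoped InnerProductSpace RealInnerProductSpace

namespace LinearMap.IsSymmetric

theorem inner_map_add_self_of_mem_orthogonal {𝕜 E : Type*} [RCLike 𝕜] [NormedAddCommGroup E]
    [InnerProductSpace 𝕜 E] {T : E →ₗ[𝕜] E} {K : Submodule 𝕜 E} (hT : T.IsSymmetric)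
    (hK : ∀ x ∈ K, T x ∈ K) {p r : E} (hp : p ∈ K) (hr : r ∈ Kᗮ) :
    ⟪T (p + r), p + r⟫_𝕜 = ⟪T p, p⟫_𝕜 + ⟪T r, r⟫_𝕜 := by
  have hpr : ⟪T p, r⟫_𝕜 = 0 := hr _ (hK p hp)
  have hrp : ⟪T r, p⟫_𝕜 = 0 := by rw [hT, ← inner_conj_symm, hpr, map_zero]
  simp only [map_add, inner_add_left, inner_add_right, hpr, hrp]
  ring

theorem inner_map_starProjection_lt {E : Type*} [NormedAddCommGroup E] [InnerProductSpace ℝ E]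
    {T : E →ₗ[ℝ] E} {K : Submodule ℝ E} [K.HasOrthogonalProjection] (hT : T.IsSymmetric)
    (hK : ∀ x ∈ K, T x ∈ K) (hT_nonneg : ∀ x, 0 ≤ ⟪T x, x⟫)
    (hT_ker : ∀ x, ⟪T x, x⟫ = 0 → x ∈ K) {h : E} (hh : h ∉ K) :
    ⟪T (K.starProjection h), K.starProjection h⟫ < ⟪T h, h⟫ := by
  set r := h - K.starProjection h
  have hr : r ∈ Kᗮ := K.sub_starProjection_mem_orthogonal h
  have hr_ne : r ≠ 0 := fun h0 ↦ hh (sub_eq_zero.mp h0 ▸ K.starProjection_apply_mem h)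
  -- `r ∈ K ∩ Kᗮ` would force `r = 0`.
  have hr_pos : 0 < ⟪T r, r⟫ := (hT_nonneg r).lt_of_ne fun h0 ↦
    hr_ne (inner_self_eq_zero.mp (hr r (hT_ker r h0.symm)))
  have hdecomp : ⟪T h, h⟫ = ⟪T (K.starProjection h), K.starProjection h⟫ + ⟪T r, r⟫ := by
    rw [← hT.inner_map_add_self_of_mem_orthogonal hK (K.starProjection_apply_mem h) hr,
      add_sub_cancel]
  linarith

end LinearMap.IsSymmetric

theorem stmt8_general {H : Type*} [NormedAddCommGroup H] [InnerProductSpace ℝ H]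
    (Q : H →L[ℝ] H) (hsa : ∀ x y : H, ⟪Q x, y⟫ = ⟪x, Q y⟫)
    (hpsd : ∀ h : H, 0 ≤ ⟪Q h, h⟫)
    (M : Submodule ℝ H) [CompleteSpace M]
    (F : H → ℝ → EReal)
    (ha : ∀ (h : H) (u : ℝ), 0 ≤ u → F ((M.orthogonalProjectionOnto h : H)) u ≤ F h u)
    (hb : ∀ h : H, StrictMonoOn (F h) (Set.Ici (0 : ℝ)))
    (hc : ∀ x ∈ M, Q x ∈ M)
    (hN : ∀ g : H, ⟪Q g, g⟫ = 0 → g ∈ M) :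
    ∀ hstar : H, (∀ h : H, F hstar (Real.sqrt ⟪Q hstar, hstar⟫) ≤ F h (Real.sqrt ⟪Q h, h⟫)) →
      hstar ∈ M := by
  intro hstar hmin
  by_contra hnotM
  set p := M.starProjection hstar
  have hlt : ⟪Q p, p⟫ < ⟪Q hstar, hstar⟫ :=
    LinearMap.IsSymmetric.inner_map_starProjection_lt (T := (Q : H →ₗ[ℝ] H)) hsa hc hpsd hN hnotM
  have hcycle : F p √⟪Q p, p⟫ < F p √⟪Q p, p⟫ :=
    calc F p √⟪Q p, p⟫ < F p √⟪Q hstar, hstar⟫ :=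
          hb p (Real.sqrt_nonneg _) (Real.sqrt_nonneg _) (Real.sqrt_lt_sqrt (hpsd p) hlt)
      _ ≤ F hstar √⟪Q hstar, hstar⟫ := ha hstar _ (Real.sqrt_nonneg _)
      _ ≤ F p √⟪Q p, p⟫ := hmin p
  exact hcycle.false

theorem stmt8 {H : Type*} [NormedAddCommGroup H] [InnerProductSpace ℝ H] [CompleteSpace H]
    (Q : H →L[ℝ] H) (hsa : ∀ x y : H, ⟪Q x, y⟫ = ⟪x, Q y⟫)
    (hpsd : ∀ h : H, 0 ≤ ⟪Q h, h⟫)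
    (M : Submodule ℝ H) [CompleteSpace M]
    (F : H → ℝ → EReal)
    (ha : ∀ (h : H) (u : ℝ), 0 ≤ u → F ((M.orthogonalProjectionOnto h : H)) u ≤ F h u)
    (hb : ∀ h : H, StrictMonoOn (F h) (Set.Ici (0 : ℝ)))
    (hc : ∀ x ∈ M, Q x ∈ M)
    (hN : ∀ g : H, ⟪Q g, g⟫ = 0 → g ∈ M) :
    ∀ hstar : H, (∀ h : H, F hstar (Real.sqrt ⟪Q hstar, hstar⟫) ≤ F h (Real.sqrt ⟪Q h, h⟫)) →
      hstar ∈ M :=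
  stmt8_general Q hsa hpsd M F ha hb hc hN
end
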